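/- arXiv:1701.08697 — 4 statements merged into one kernel-verified Lean document; each statement's English description precedes it below -/
import Mathlib

section
/- With $A_{ij}, B_{ij}$ as in the MDD estimator, the statistic $MDD_n({\mathcal{Y}}|{\mathcal{X}})^2$ admits the representation as a fourth-order $U$-statistic: $MDD_n({\mathcal{Y}}|{\mathcal{X}})^2 = \binom{n}{4}^{-1}\sum_{i<j<q<r} h({\mathcal{Z}}_i,{\mathcal{Z}}_j,{\mathcal{Z}}_q,{\mathcal{Z}}_r)$, where $h({\mathcal{Z}}_i,{\mathcal{Z}}_j,{\mathcal{Z}}_q,{\mathcal{Z}}_r) = \frac{1}{4!}\sum_{(s,t,u,v)} (A_{st}B_{uv} + A_{st}B_{st} - 2A_{st}B_{su})$, the sum being over all $4! = 24$ permutations $(s,t,u,v)$ of $(i,j,q,r)$. -/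
/-!
Write `a_i = ∑_j A_ij`, `b_i = ∑_j B_ij`, `S_A = ∑_ij A_ij`, `S_B = ∑_ij B_ij`; both sides are
combinations of `T = ∑_ij A_ij B_ij`, `R = ∑_i a_i b_i` and `S_A S_B`.

A `𝒰`-centered matrix has vanishing row and column sums, so centering the second factor does not
change `∑_{i ≠ j} Ã_ij B̃_ij`, which therefore equals
`∑_ij Ã_ij B_ij = T - 2R/(n-2) + S_A S_B/((n-1)(n-2))`.

Since `h` is the symmetrization of `A_st B_uv + A_st B_st - 2 A_st B_su`, summing it over increasing
quadruples is `1/24` times summing that expression over all quadruples of distinct indices.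
Removing the coincidences one index at a time turns this into `S_A S_B - 2(n-1)R + (n-1)(n-2)T`,
which is `(n-1)(n-2)` times the left-hand sum.
-/

open Finset

/-- The `𝒰`-centered version of an `n × n` matrix `B`. -/
noncomputable def ucenter (n : ℕ) (B : Fin n → Fin n → ℝ) : Fin n → Fin n → ℝ :=
  fun i j =>
    if i = j then 0
    else
      B i j - (∑ l, B i l) / ((n : ℝ) - 2) - (∑ k, B k j) / ((n : ℝ) - 2)
        + (∑ k, ∑ l, B k l) / (((n : ℝ) - 1) * ((n : ℝ) - 2))

/-- The symmetric fourth-order kernel `h` of `MDD_n(𝒴|𝒳)²`: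
`h(z₁,z₂,z₃,z₄) = (1/4!) ∑_{(s,t,u,v)} (A_{st}B_{uv} + A_{st}B_{st} - 2 A_{st}B_{su})`,
the sum being over all 24 permutations of the four points. -/
noncomputable def hker {q : ℕ} (z1 z2 z3 z4 : EuclideanSpace ℝ (Fin q) × ℝ) : ℝ :=
  (1 / 24 : ℝ) * ∑ σ : Equiv.Perm (Fin 4),
    (fun w : Fin 4 → EuclideanSpace ℝ (Fin q) × ℝ =>
        ‖(w 0).1 - (w 1).1‖ * (|(w 2).2 - (w 3).2| ^ 2 / 2)
          + ‖(w 0).1 - (w 1).1‖ * (|(w 0).2 - (w 1).2| ^ 2 / 2)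
          - 2 * (‖(w 0).1 - (w 1).1‖ * (|(w 0).2 - (w 2).2| ^ 2 / 2)))
      (fun m => ![z1, z2, z3, z4] (σ m))

section Symmetrization

variable {α M : Type*} [LinearOrder α] [Fintype α] [AddCommMonoid M] {k : ℕ}

theorem sum_strictMono_sum_perm (g : (Fin k → α) → M) :
    ∑ w ∈ univ.filter (StrictMono : (Fin k → α) → Prop), ∑ σ : Equiv.Perm (Fin k), g (w ∘ σ)
      = ∑ w ∈ univ.filter (Function.Injective : (Fin k → α) → Prop), g w := by
  rw [← sum_product']
  refine sum_bij (fun p _ => p.1 ∘ p.2) ?_ ?_ ?_ (fun _ _ => rfl)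
  · rintro ⟨w, σ⟩ h
    simp only [mem_product, mem_filter, mem_univ, true_and, and_true] at h ⊢
    exact h.injective.comp σ.injective
  · rintro ⟨w, σ⟩ hw ⟨w', σ'⟩ hw' h
    simp only [mem_product, mem_filter, mem_univ, true_and, and_true] at hw hw'
    obtain rfl : w = w' := by
      rw [← hw.range_inj hw', ← EquivLike.range_comp w σ, ← EquivLike.range_comp w' σ']
      exact congrArg Set.range h
    exact Prod.ext rfl (Equiv.ext fun i => hw.injective (congrFun h i))
  · intro v hv
    simp only [mem_filter, mem_univ, true_and] at hv
    refine ⟨(v ∘ Tuple.sort v, (Tuple.sort v).symm), ?_, ?_⟩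
    · simp only [mem_product, mem_filter, mem_univ, true_and, and_true]
      exact (Tuple.monotone_sort v).strictMono_of_injective (hv.comp (Tuple.sort v).injective)
    · ext i
      simp

end Symmetrization

section DistinctSums

variable {α M : Type*} [Fintype α] [DecidableEq α] [AddCommMonoid M]

def sumDistinct2 (H : α → α → M) : M :=
  ∑ s, ∑ t, if s ≠ t then H s t else 0

def sumDistinct3 (G : α → α → α → M) : M :=
  ∑ s, ∑ t, ∑ u, if s ≠ t ∧ s ≠ u ∧ t ≠ u then G s t u else 0

def sumDistinct4 (F : α → α → α → α → M) : M :=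
  ∑ s, ∑ t, ∑ u, ∑ v,
    if s ≠ t ∧ s ≠ u ∧ s ≠ v ∧ t ≠ u ∧ t ≠ v ∧ u ≠ v then F s t u v else 0

end DistinctSums

section Peeling

variable {α M R : Type*} [Fintype α] [DecidableEq α] [AddCommGroup M] [CommRing R]

theorem sum_ite_ne_and (a : α) (p : α → Prop) [DecidablePred p] (f : α → M) :
    ∑ v, (if a ≠ v ∧ p v then f v else 0)
      = ∑ v, (if p v then f v else 0) - if p a then f a else 0 := by
  have h : ∀ v, (if a ≠ v ∧ p v then f v else 0)
      = (if p v then f v else 0) - if a = v then (if p v then f v else 0) else 0 := by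
    intro v; by_cases hv : a = v <;> simp [hv]
  simp only [h, sum_sub_distrib, sum_ite_eq, mem_univ, if_true]

theorem sum_ite_ne (a : α) (f : α → M) :
    ∑ v, (if a ≠ v then f v else 0) = ∑ v, f v - f a := by
  simpa using sum_ite_ne_and a (fun _ => True) f

theorem sumDistinct2_eq (H : α → α → M) :
    sumDistinct2 H = ∑ s, (∑ t, H s t - H s s) :=
  sum_congr rfl fun s _ => sum_ite_ne s (H s)

theorem sumDistinct3_eq (G : α → α → α → M) :
    sumDistinct3 G = sumDistinct2 fun s t => ∑ u, G s t u - G s t s - G s t t := by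
  refine sum_congr rfl fun s _ => sum_congr rfl fun t _ => ?_
  by_cases hst : s = t
  · simp [hst]
  · simp only [hst, ne_eq, not_false_eq_true, true_and, if_true]
    rw [sum_ite_ne_and, sum_ite_ne]
    simp only [Ne.symm hst, not_false_eq_true, if_true]
    abel

theorem sumDistinct4_eq (F : α → α → α → α → M) :
    sumDistinct4 F = sumDistinct3 fun s t u =>
      ∑ v, F s t u v - F s t u s - F s t u t - F s t u u := by
  refine sum_congr rfl fun s _ => sum_congr rfl fun t _ => sum_congr rfl fun u _ => ?_
  by_cases h : s ≠ t ∧ s ≠ u ∧ t ≠ u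
  · obtain ⟨hst, hsu, htu⟩ := h
    simp only [hst, hsu, htu, ne_eq, not_false_eq_true, true_and, if_true]
    rw [sum_ite_ne_and, sum_ite_ne_and, sum_ite_ne]
    simp only [Ne.symm hst, Ne.symm hsu, Ne.symm htu, not_false_eq_true, and_self,
      if_true]
    abel
  · rw [if_neg h]
    exact sum_eq_zero fun v _ => if_neg (by tauto)

theorem sumDistinct2_of_diag_eq_zero {H : α → α → M} (hH : ∀ s, H s s = 0) :
    sumDistinct2 H = ∑ s, ∑ t, H s t := by
  simp [sumDistinct2_eq, hH]

theorem sumDistinct3_eq_mul_sumDistinct2 (H : α → α → R) :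
    sumDistinct3 (fun s t _ => H s t) = ((Fintype.card α : R) - 2) * sumDistinct2 H := by
  rw [sumDistinct3_eq, sumDistinct2, sumDistinct2, mul_sum]
  refine sum_congr rfl fun s _ => ?_
  rw [mul_sum]
  refine sum_congr rfl fun t _ => ?_
  rw [mul_ite, mul_zero, sum_const, card_univ, nsmul_eq_mul]
  congr 1
  ring

theorem sumDistinct4_eq_mul_sumDistinct3 (G : α → α → α → R) :
    sumDistinct4 (fun s t u _ => G s t u) = ((Fintype.card α : R) - 3) * sumDistinct3 G := by
  rw [sumDistinct4_eq, sumDistinct3, sumDistinct3, mul_sum]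
  refine sum_congr rfl fun s _ => ?_
  rw [mul_sum]
  refine sum_congr rfl fun t _ => ?_
  rw [mul_sum]
  refine sum_congr rfl fun u _ => ?_
  rw [mul_ite, mul_zero, sum_const, card_univ, nsmul_eq_mul]
  congr 1
  ring

end Peeling

section FinFour

variable {α M : Type*}

theorem strictMono_fin_four_iff [Preorder α] (w : Fin 4 → α) :
    StrictMono w ↔ w 0 < w 1 ∧ w 1 < w 2 ∧ w 2 < w 3 := by
  rw [Fin.strictMono_iff_lt_succ]
  refine ⟨fun h => ⟨h 0, h 1, h 2⟩, fun ⟨h₀, h₁, h₂⟩ i => ?_⟩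
  fin_cases i <;> assumption

theorem injective_fin_four_iff (w : Fin 4 → α) :
    Function.Injective w ↔
      w 0 ≠ w 1 ∧ w 0 ≠ w 2 ∧ w 0 ≠ w 3 ∧ w 1 ≠ w 2 ∧ w 1 ≠ w 3 ∧ w 2 ≠ w 3 := by
  refine ⟨fun h => ⟨?_, ?_, ?_, ?_, ?_, ?_⟩, fun h i j hij => ?_⟩
  all_goals first
    | exact fun e => absurd (h e) (by decide)
    | fin_cases i <;> fin_cases j <;> simp_all

variable [Fintype α] [AddCommMonoid M]

theorem sum_fin_four_pi (f : α → α → α → α → M) :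
    ∑ w : Fin 4 → α, f (w 0) (w 1) (w 2) (w 3) = ∑ i, ∑ j, ∑ k, ∑ l, f i j k l := by
  let e : (α × α × α × α) ≃ (Fin 4 → α) :=
    { toFun := fun p => ![p.1, p.2.1, p.2.2.1, p.2.2.2]
      invFun := fun w => (w 0, w 1, w 2, w 3)
      left_inv := fun _ => rfl
      right_inv := fun w => by ext m; fin_cases m <;> rfl }
  rw [← e.sum_comp]
  simp only [Fintype.sum_prod_type]
  rfl

theorem sum_lt_chain_eq_sum_strictMono [LinearOrder α] (f : α → α → α → α → M) :
    ∑ i, ∑ j ∈ univ.filter (fun j => i < j), ∑ k ∈ univ.filter (fun k => j < k),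
        ∑ l ∈ univ.filter (fun l => k < l), f i j k l
      = ∑ w ∈ univ.filter (StrictMono : (Fin 4 → α) → Prop), f (w 0) (w 1) (w 2) (w 3) := by
  simp only [sum_filter, strictMono_fin_four_iff]
  rw [sum_fin_four_pi (fun i j k l => if i < j ∧ j < k ∧ k < l then f i j k l else 0)]
  simp only [ite_and, sum_ite_irrel, sum_const_zero]

theorem sum_injective_fin_four [DecidableEq α] (f : α → α → α → α → M) :
    ∑ w ∈ univ.filter (Function.Injective : (Fin 4 → α) → Prop), f (w 0) (w 1) (w 2) (w 3)
      = sumDistinct4 f := by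
  simp only [sum_filter, injective_fin_four_iff]
  exact sum_fin_four_pi fun s t u v =>
    if s ≠ t ∧ s ≠ u ∧ s ≠ v ∧ t ≠ u ∧ t ≠ v ∧ u ≠ v then f s t u v else 0

theorem sum_lt_chain_sum_perm [LinearOrder α] (f : α → α → α → α → M) :
    ∑ i, ∑ j ∈ univ.filter (fun j => i < j), ∑ k ∈ univ.filter (fun k => j < k),
        ∑ l ∈ univ.filter (fun l => k < l), ∑ σ : Equiv.Perm (Fin 4),
          f (![i, j, k, l] (σ 0)) (![i, j, k, l] (σ 1)) (![i, j, k, l] (σ 2)) (![i, j, k, l] (σ 3))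
      = sumDistinct4 f := by
  have hvec : ∀ w : Fin 4 → α, ![w 0, w 1, w 2, w 3] = w := fun w => by
    ext m; fin_cases m <;> rfl
  rw [sum_lt_chain_eq_sum_strictMono (fun i j k l => ∑ σ : Equiv.Perm (Fin 4),
    f (![i, j, k, l] (σ 0)) (![i, j, k, l] (σ 1)) (![i, j, k, l] (σ 2)) (![i, j, k, l] (σ 3)))]
  simp only [hvec]
  exact (sum_strictMono_sum_perm fun v => f (v 0) (v 1) (v 2) (v 3)).trans
    (sum_injective_fin_four f)

end FinFour

section Kernel

variable {α R : Type*} [Fintype α] [DecidableEq α] [CommRing R] {A B : α → α → R}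

def mddTerm (A B : α → α → R) (s t u v : α) : R :=
  A s t * B u v + A s t * B s t - 2 * (A s t * B s u)

theorem sumDistinct4_mul_same (hA0 : ∀ s, A s s = 0) :
    sumDistinct4 (fun s t _ _ => A s t * B s t)
      = ((Fintype.card α : R) - 3) * ((Fintype.card α : R) - 2) * ∑ s, ∑ t, A s t * B s t := by
  rw [sumDistinct4_eq_mul_sumDistinct3 (fun s t _ => A s t * B s t),
    sumDistinct3_eq_mul_sumDistinct2, sumDistinct2_of_diag_eq_zero (by simp [hA0]), mul_assoc]

theorem sumDistinct4_mul_adjacent (hA0 : ∀ s, A s s = 0) (hB0 : ∀ s, B s s = 0) :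
    sumDistinct4 (fun s t u _ => A s t * B s u)
      = ((Fintype.card α : R) - 3) *
          (∑ s, (∑ t, A s t) * (∑ t, B s t) - ∑ s, ∑ t, A s t * B s t) := by
  rw [sumDistinct4_eq_mul_sumDistinct3 (fun s t u => A s t * B s u), sumDistinct3_eq,
    sumDistinct2_of_diag_eq_zero (by simp [hA0])]
  simp only [← mul_sum, hB0, mul_zero, sub_zero, mul_sub, sum_sub_distrib, sum_mul]

theorem sumDistinct4_mul_disjoint (hA : ∀ s t, A s t = A t s) (hA0 : ∀ s, A s s = 0)
    (hB : ∀ s t, B s t = B t s) (hB0 : ∀ s, B s s = 0) :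
    sumDistinct4 (fun s t u v => A s t * B u v)
      = (∑ s, ∑ t, A s t) * (∑ s, ∑ t, B s t)
          - 4 * ∑ s, (∑ t, A s t) * (∑ t, B s t) + 2 * ∑ s, ∑ t, A s t * B s t := by
  have hcol : ∀ s, ∑ u, B u s = ∑ u, B s u := fun s => sum_congr rfl fun u _ => hB u s
  have hrow : ∑ s, ∑ t, A s t * ∑ u, B t u = ∑ s, (∑ t, A s t) * ∑ t, B s t := by
    rw [sum_comm]
    refine sum_congr rfl fun t _ => ?_
    rw [← sum_mul]
    exact congrArg (· * _) (sum_congr rfl fun s _ => hA s t)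
  have hswap : ∑ s, ∑ t, A s t * B t s = ∑ s, ∑ t, A s t * B s t :=
    sum_congr rfl fun s _ => sum_congr rfl fun t _ => by rw [hB]
  rw [sumDistinct4_eq, sumDistinct3_eq, sumDistinct2_of_diag_eq_zero (by simp [hA0])]
  simp only [← mul_sum, hB0, mul_zero, sub_zero, sum_sub_distrib, hcol, hrow, hswap, ← sum_mul]
  ring

theorem sumDistinct4_mddTerm (hA : ∀ s t, A s t = A t s) (hA0 : ∀ s, A s s = 0)
    (hB : ∀ s t, B s t = B t s) (hB0 : ∀ s, B s s = 0) :
    sumDistinct4 (mddTerm A B)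
      = (∑ s, ∑ t, A s t) * (∑ s, ∑ t, B s t)
          - 2 * ((Fintype.card α : R) - 1) * ∑ s, (∑ t, A s t) * (∑ t, B s t)
          + ((Fintype.card α : R) - 1) * ((Fintype.card α : R) - 2) * ∑ s, ∑ t, A s t * B s t := by
  have hlin : sumDistinct4 (mddTerm A B)
      = sumDistinct4 (fun s t u v => A s t * B u v) + sumDistinct4 (fun s t _ _ => A s t * B s t)
          - 2 * sumDistinct4 (fun s t u _ => A s t * B s u) := by
    simp only [sumDistinct4, mddTerm, mul_sum, ← sum_add_distrib, ← sum_sub_distrib]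
    refine sum_congr rfl fun s _ => sum_congr rfl fun t _ => sum_congr rfl fun u _ =>
      sum_congr rfl fun v _ => ?_
    split_ifs <;> ring
  rw [hlin, sumDistinct4_mul_disjoint hA hA0 hB hB0, sumDistinct4_mul_same hA0,
    sumDistinct4_mul_adjacent hA0 hB0]
  ring

end Kernel

section UCentering

variable {n : ℕ} {A B C : Fin n → Fin n → ℝ}

theorem ucenter_self (A : Fin n → Fin n → ℝ) (i : Fin n) : ucenter n A i i = 0 := if_pos rfl

theorem ucenter_of_symm (hA : ∀ i j, A i j = A j i) (i j : Fin n) :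
    ucenter n A i j = if i = j then 0 else
      A i j - (∑ l, A i l) / ((n : ℝ) - 2) - (∑ l, A j l) / ((n : ℝ) - 2)
        + (∑ k, ∑ l, A k l) / (((n : ℝ) - 1) * ((n : ℝ) - 2)) := by
  simp only [ucenter, hA _ j]

theorem ucenter_comm (hA : ∀ i j, A i j = A j i) (i j : Fin n) :
    ucenter n A i j = ucenter n A j i := by
  simp only [ucenter_of_symm hA, eq_comm (a := i), hA i j]
  split_ifs <;> ring

theorem sum_ucenter_row (hA : ∀ i j, A i j = A j i) (hA0 : ∀ i, A i i = 0)
    (h1 : (n : ℝ) - 1 ≠ 0) (h2 : (n : ℝ) - 2 ≠ 0) (i : Fin n) :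
    ∑ j, ucenter n A i j = 0 := by
  have h : ∀ j, ucenter n A i j = if i ≠ j then A i j - (∑ l, A i l) / ((n : ℝ) - 2)
      - (∑ l, A j l) / ((n : ℝ) - 2) + (∑ k, ∑ l, A k l) / (((n : ℝ) - 1) * ((n : ℝ) - 2))
      else 0 := fun j => by simp only [ucenter_of_symm hA, ne_eq, ite_not]
  simp only [h, sum_ite_ne, sum_add_distrib, sum_sub_distrib, ← sum_div, sum_const, card_univ,
    Fintype.card_fin, nsmul_eq_mul, hA0]
  field_simp
  ring

theorem sum_ucenter_col (hA : ∀ i j, A i j = A j i) (hA0 : ∀ i, A i i = 0)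
    (h1 : (n : ℝ) - 1 ≠ 0) (h2 : (n : ℝ) - 2 ≠ 0) (j : Fin n) :
    ∑ i, ucenter n A i j = 0 := by
  simpa only [ucenter_comm hA _ j] using sum_ucenter_row hA hA0 h1 h2 j

theorem sum_mul_ucenter_of_sum_eq_zero (hC0 : ∀ i, C i i = 0) (hrow : ∀ i, ∑ j, C i j = 0)
    (hcol : ∀ j, ∑ i, C i j = 0) (B : Fin n → Fin n → ℝ) :
    ∑ i, ∑ j, C i j * ucenter n B i j = ∑ i, ∑ j, C i j * B i j := by
  have hterm : ∀ i j, C i j * ucenter n B i j = C i j * B i j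
      - (∑ l, B i l) / ((n : ℝ) - 2) * C i j - (∑ k, B k j) / ((n : ℝ) - 2) * C i j
      + (∑ k, ∑ l, B k l) / (((n : ℝ) - 1) * ((n : ℝ) - 2)) * C i j := by
    intro i j
    by_cases h : i = j
    · subst h; simp [hC0, ucenter_self]
    · rw [ucenter, if_neg h]; ring
  simp only [hterm, sum_add_distrib, sum_sub_distrib, ← mul_sum, hrow, mul_zero, sum_const_zero]
  rw [sum_comm (f := fun i j => (∑ k, B k j) / ((n : ℝ) - 2) * C i j)]
  simp only [← mul_sum, hcol, mul_zero, sum_const_zero, sub_zero, add_zero]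

theorem sum_ucenter_mul (hB0 : ∀ i, B i i = 0) :
    ∑ i, ∑ j, ucenter n A i j * B i j = ∑ i, ∑ j, A i j * B i j
      - (∑ i, (∑ l, A i l) * (∑ l, B i l) + ∑ j, (∑ k, A k j) * (∑ k, B k j)) / ((n : ℝ) - 2)
      + (∑ k, ∑ l, A k l) * (∑ k, ∑ l, B k l) / (((n : ℝ) - 1) * ((n : ℝ) - 2)) := by
  have hterm : ∀ i j, ucenter n A i j * B i j = A i j * B i j
      - (∑ l, A i l) / ((n : ℝ) - 2) * B i j - (∑ k, A k j) / ((n : ℝ) - 2) * B i j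
      + (∑ k, ∑ l, A k l) / (((n : ℝ) - 1) * ((n : ℝ) - 2)) * B i j := by
    intro i j
    by_cases h : i = j
    · subst h; simp [hB0, ucenter_self]
    · rw [ucenter, if_neg h]; ring
  simp only [hterm, sum_add_distrib, sum_sub_distrib, ← mul_sum]
  rw [sum_comm (f := fun i j => (∑ k, A k j) / ((n : ℝ) - 2) * B i j)]
  simp only [← mul_sum, div_mul_eq_mul_div, ← sum_div]
  ring

theorem sum_ucenter_mul_ucenter (hA : ∀ i j, A i j = A j i) (hA0 : ∀ i, A i i = 0)
    (hB : ∀ i j, B i j = B j i) (hB0 : ∀ i, B i i = 0)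
    (h1 : (n : ℝ) - 1 ≠ 0) (h2 : (n : ℝ) - 2 ≠ 0) :
    ∑ i, ∑ j, ucenter n A i j * ucenter n B i j
      = ∑ i, ∑ j, A i j * B i j - 2 / ((n : ℝ) - 2) * ∑ i, (∑ j, A i j) * (∑ j, B i j)
        + (∑ i, ∑ j, A i j) * (∑ i, ∑ j, B i j) / (((n : ℝ) - 1) * ((n : ℝ) - 2)) := by
  have hcolA : ∀ j, ∑ k, A k j = ∑ k, A j k := fun j => sum_congr rfl fun k _ => hA k j
  have hcolB : ∀ j, ∑ k, B k j = ∑ k, B j k := fun j => sum_congr rfl fun k _ => hB k j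
  rw [sum_mul_ucenter_of_sum_eq_zero (ucenter_self A) (sum_ucenter_row hA hA0 h1 h2)
    (sum_ucenter_col hA hA0 h1 h2), sum_ucenter_mul hB0]
  simp only [hcolA, hcolB]
  ring

end UCentering

theorem Nat.cast_choose_four {K : Type*} [Field K] [CharZero K] (n : ℕ) :
    (n.choose 4 : K) = n * (n - 1) * (n - 2) * (n - 3) / 24 := by
  rcases lt_or_ge n 4 with h | h
  · rw [Nat.choose_eq_zero_of_lt h]
    interval_cases n <;> norm_num
  · obtain ⟨m, rfl⟩ := Nat.exists_eq_add_of_le' h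
    have hm : (m.factorial : K) ≠ 0 := Nat.cast_ne_zero.2 m.factorial_ne_zero
    rw [Nat.cast_choose K (by omega : 4 ≤ m + 4), Nat.add_sub_cancel]
    push_cast [Nat.factorial_succ]
    field_simp
    ring

/-- `MDD_n(𝒴|𝒳)²` is a fourth-order `U`-statistic with kernel `h`. -/
theorem stmt3 (q n : ℕ) (hn : 4 ≤ n)
    (Z : Fin n → EuclideanSpace ℝ (Fin q) × ℝ) :
    (1 / ((n : ℝ) * ((n : ℝ) - 3))) *
        ∑ i, ∑ j ∈ Finset.univ.filter (fun j => j ≠ i),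
          ucenter n (fun k l => ‖(Z k).1 - (Z l).1‖) i j *
            ucenter n (fun k l => |(Z k).2 - (Z l).2| ^ 2 / 2) i j
      = ((n.choose 4 : ℝ))⁻¹ *
          ∑ i, ∑ j ∈ Finset.univ.filter (fun j => i < j),
            ∑ k ∈ Finset.univ.filter (fun k => j < k),
              ∑ r ∈ Finset.univ.filter (fun r => k < r),
                hker (Z i) (Z j) (Z k) (Z r) := by
  set A : Fin n → Fin n → ℝ := fun k l => ‖(Z k).1 - (Z l).1‖
  set B : Fin n → Fin n → ℝ := fun k l => |(Z k).2 - (Z l).2| ^ 2 / 2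
  have hA : ∀ i j, A i j = A j i := fun i j => norm_sub_rev _ _
  have hA0 : ∀ i, A i i = 0 := by simp [A]
  have hB : ∀ i j, B i j = B j i := fun i j => by simp only [B, abs_sub_comm]
  have hB0 : ∀ i, B i i = 0 := by simp [B]
  have hn' : (4 : ℝ) ≤ n := by exact_mod_cast hn
  have hkernel : ∀ i j k r, hker (Z i) (Z j) (Z k) (Z r) = 1 / 24 * ∑ σ : Equiv.Perm (Fin 4),
      mddTerm A B (![i, j, k, r] (σ 0)) (![i, j, k, r] (σ 1)) (![i, j, k, r] (σ 2))
        (![i, j, k, r] (σ 3)) := by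
    intro i j k r
    have hZ : ![Z i, Z j, Z k, Z r] = Z ∘ ![i, j, k, r] := by
      funext m; fin_cases m <;> rfl
    simp only [hker, hZ]
    rfl
  have hdiag : ∀ i, ∑ j ∈ univ.filter (fun j => j ≠ i), ucenter n A i j * ucenter n B i j
      = ∑ j, ucenter n A i j * ucenter n B i j := fun i => by
    rw [filter_ne', sum_erase _ (by simp [ucenter_self])]
  simp only [hdiag, hkernel, ← mul_sum]
  rw [sum_ucenter_mul_ucenter hA hA0 hB hB0 (by linarith) (by linarith), sum_lt_chain_sum_perm,
    sumDistinct4_mddTerm hA hA0 hB hB0, Fintype.card_fin, Nat.cast_choose_four]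
  have : (n : ℝ) ≠ 0 := by positivity
  have : (n : ℝ) - 1 ≠ 0 := by linarith
  have : (n : ℝ) - 2 ≠ 0 := by linarith
  have : (n : ℝ) - 3 ≠ 0 := by linarith
  field_simp
  ring
end

section
/- Let $x$ be a real random variable with $\mathbb{E}|x| < \infty$, $x'$ an independent copy, $K(u,v)=|u-v|$, and $U(u,v) = \mathbb{E}[K(u,x')] + \mathbb{E}[K(x,v)] - K(u,v) - \mathbb{E}[K(x,x')]$. Then for all real $u,v$: $|U(u,v)| \leq \max\{|\mathbb{E}[K(x,x')] - 2\,\mathbb{E}[K(u,x')]|,\ \mathbb{E}[K(x,x')]\}$. In particular $|U(u,v)| \le a(u)$ where $a(u) := \max\{|\mathbb{E}|x-x'| - 2\mathbb{E}|u - x'||, \mathbb{E}|x-x'|\}$ depends only on $u$. -/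
open MeasureTheory

/-- Pointwise bound on the double-centered distance kernel: for a real random variable `x`
with law `ν` and finite first moment, `U(u,v) = E|u-x'| + E|x-v| - |u-v| - E|x-x'|`
satisfies `|U(u,v)| ≤ max{|E|x-x'| - 2E|u-x'||, E|x-x'|}` for all `u, v`. -/
theorem stmt12 (ν : Measure ℝ) [IsProbabilityMeasure ν]
    (hint : Integrable (fun t : ℝ => t) ν) (u v : ℝ) :
    |(∫ t, |u - t| ∂ν) + (∫ t, |t - v| ∂ν) - |u - v| - ∫ s, ∫ t, |s - t| ∂ν ∂ν|
      ≤ max |(∫ s, ∫ t, |s - t| ∂ν ∂ν) - 2 * ∫ t, |u - t| ∂ν|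
          (∫ s, ∫ t, |s - t| ∂ν ∂ν) := by
  set A := ∫ t, |u - t| ∂ν with hA
  set B := ∫ t, |t - v| ∂ν with hB
  set D := ∫ s, ∫ t, |s - t| ∂ν ∂ν with hD
  have hiA : Integrable (fun t : ℝ => |u - t|) ν := ((integrable_const u).sub hint).abs
  have hiB : Integrable (fun t : ℝ => |t - v|) ν := (hint.sub (integrable_const v)).abs
  have hDnn : 0 ≤ D :=
    integral_nonneg fun s => integral_nonneg fun t => abs_nonneg _
  set c := |u - v| with hc
  have key : |B - c| ≤ A := by
    have h1 : B - c = ∫ t, (|t - v| - |u - v|) ∂ν := by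
      rw [hc]
      rw [integral_sub hiB (integrable_const _), integral_const]
      simp
      exact hB
    rw [h1]
    calc |∫ t, (|t - v| - |u - v|) ∂ν| ≤ ∫ t, abs ((|t - v|) - (|u - v|)) ∂ν :=
          by simpa using norm_integral_le_integral_norm (μ := ν) (fun t => (|t - v|) - (|u - v|))
      _ ≤ ∫ t, |u - t| ∂ν := by
          apply integral_mono (hiB.sub (integrable_const _)).abs hiA
          intro t
          simp only [Pi.sub_apply]
          have := abs_abs_sub_abs_le_abs_sub (t - v) (u - v)
          have h2 : |t - v - (u - v)| = |u - t| := by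
            rw [show t - v - (u - v) = -(u - t) by ring, abs_neg]
          linarith [this, h2.le, h2.ge]
      _ = A := rfl
  have hk := abs_le.mp key
  have hAnn : 0 ≤ A := integral_nonneg fun t => abs_nonneg _
  rw [abs_le]
  constructor
  · have := le_max_right |D - 2 * A| D
    linarith [hk.1]
  · have h3 : 2 * A - D ≤ |D - 2 * A| := by
      rw [abs_sub_comm]; exact le_abs_self _
    have := le_max_left |D - 2 * A| D
    linarith [hk.2]
end

section
/- Let $x_j$ be a real random variable with finite second moment, $x_j'$ an independent copy, and $U_j(u,v) = \mathbb{E}|u - x_j'| + \mathbb{E}|x_j - v| - |u-v| - \mathbb{E}|x_j - x_j'|$. Then there exists a universal constant $C > 0$ such that $\mathbb{E}[U_j(x_j, x_j')^4] \leq C\, \mathrm{var}(x_j)^2$. -/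
/-!
With `m u = E|u - x'|` one has `U(u, v) = (m u - E m) + (m v - |u - v|)`, and the triangle
inequality `| |v - t| - |u - v| | ≤ |u - t|` gives `|m v - |u - v|| ≤ m u`. Comparing `m` with the
distance to the mean `μ₀` then yields `|U(u, v)| ≤ g u := 2|u - μ₀| + 4 E|x - μ₀|`, and by symmetry
of `U` also `|U(u, v)| ≤ g v`. Hence `U(u, v)⁴ ≤ g(u)² g(v)²`, whose integral under `ν ⊗ ν` is
`(E g²)²`, and `E g² ≤ 40 var` because `(E|x - μ₀|)² ≤ var` by Jensen.
-/

open MeasureTheory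

/-- The double-centered distance kernel `U(u,v) = E|u-x'| + E|x-v| - |u-v| - E|x-x'|`
associated with a real distribution `ν`. -/
noncomputable def Ufun (ν : Measure ℝ) (u v : ℝ) : ℝ :=
  (∫ t, |u - t| ∂ν) + (∫ t, |t - v| ∂ν) - |u - v| - ∫ s, ∫ t, |s - t| ∂ν ∂ν

open ProbabilityTheory

theorem integral_pow_four_le_of_abs_le {α : Type*} [MeasurableSpace α] {μ : Measure α}
    [SFinite μ]
    {F : α → α → ℝ} {g : α → ℝ} (hg : MemLp g 2 μ)
    (hleft : ∀ x y, |F x y| ≤ g x) (hright : ∀ x y, |F x y| ≤ g y) :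
    ∫ p : α × α, F p.1 p.2 ^ 4 ∂(μ.prod μ) ≤ (∫ x, g x ^ 2 ∂μ) ^ 2 := by
  have hpoint : ∀ x y, F x y ^ 4 ≤ g x ^ 2 * g y ^ 2 := by
    intro x y
    have hxy : |F x y| * |F x y| ≤ g x * g y :=
      mul_le_mul (hleft x y) (hright x y) (abs_nonneg _) ((abs_nonneg _).trans (hleft x x))
    calc F x y ^ 4 = (|F x y| * |F x y|) ^ 2 := by rw [← pow_two, sq_abs]; ring
      _ ≤ (g x * g y) ^ 2 := pow_le_pow_left₀ (by positivity) hxy 2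
      _ = g x ^ 2 * g y ^ 2 := by ring
  calc ∫ p : α × α, F p.1 p.2 ^ 4 ∂(μ.prod μ)
      ≤ ∫ p : α × α, g p.1 ^ 2 * g p.2 ^ 2 ∂(μ.prod μ) :=
        integral_mono_of_nonneg (.of_forall fun _ => by positivity)
          (hg.integrable_sq.mul_prod hg.integrable_sq) (.of_forall fun p => hpoint p.1 p.2)
    _ = (∫ x, g x ^ 2 ∂μ) ^ 2 :=
        (integral_prod_mul (fun x => g x ^ 2) (fun x => g x ^ 2)).trans (sq _).symm

theorem sq_integral_abs_sub_integral_le_variance {Ω : Type*} [MeasurableSpace Ω] {μ : Measure Ω}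
    [IsProbabilityMeasure μ] {X : Ω → ℝ} (hX : MemLp X 2 μ) :
    (∫ ω, |X ω - μ[X]| ∂μ) ^ 2 ≤ Var[X; μ] := by
  have hY : MemLp (fun ω => |X ω - μ[X]|) 2 μ := (hX.sub (memLp_const _)).abs
  have h := variance_nonneg (fun ω => |X ω - μ[X]|) μ
  rw [variance_eq_sub hY] at h
  simp only [Pi.pow_apply, sq_abs] at h
  rw [variance_eq_integral hX.aemeasurable]
  linarith

theorem integral_sq_mul_abs_sub_integral_add_le {Ω : Type*} [MeasurableSpace Ω]
    {μ : Measure Ω} [IsProbabilityMeasure μ] {X : Ω → ℝ} (hX : MemLp X 2 μ) (k l : ℝ) :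
    ∫ ω, (k * |X ω - μ[X]| + l * ∫ ω', |X ω' - μ[X]| ∂μ) ^ 2 ∂μ
      ≤ 2 * (k ^ 2 + l ^ 2) * Var[X; μ] := by
  set c := ∫ ω', |X ω' - μ[X]| ∂μ
  have hcent : Integrable (fun ω => (X ω - μ[X]) ^ 2) μ :=
    (hX.sub (memLp_const _)).integrable_sq
  have hc := sq_integral_abs_sub_integral_le_variance hX
  calc ∫ ω, (k * |X ω - μ[X]| + l * c) ^ 2 ∂μ
      ≤ ∫ ω, (2 * k ^ 2 * (X ω - μ[X]) ^ 2 + 2 * l ^ 2 * c ^ 2) ∂μ :=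
        integral_mono_of_nonneg (.of_forall fun _ => sq_nonneg _)
          ((hcent.const_mul _).add (integrable_const _)) (.of_forall fun ω => by
            dsimp only
            nlinarith [sq_nonneg (k * |X ω - μ[X]| - l * c), sq_abs (X ω - μ[X])])
    _ = 2 * k ^ 2 * Var[X; μ] + 2 * l ^ 2 * c ^ 2 := by
        rw [integral_add (hcent.const_mul _) (integrable_const _), integral_const_mul,
          variance_eq_integral hX.aemeasurable]
        simp
    _ ≤ 2 * (k ^ 2 + l ^ 2) * Var[X; μ] := by nlinarith [sq_nonneg l]

theorem Ufun_comm (ν : Measure ℝ) (u v : ℝ) : Ufun ν u v = Ufun ν v u := by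
  have h : ∀ w : ℝ, ∫ t, |t - w| ∂ν = ∫ t, |w - t| ∂ν := fun w =>
    integral_congr_ae (.of_forall fun t => abs_sub_comm t w)
  simp only [Ufun, h, abs_sub_comm u v]
  ring

section DistanceKernel

variable {ν : Measure ℝ} [IsProbabilityMeasure ν]

theorem integral_abs_sub_le (hX : Integrable (fun t => t) ν) (a u : ℝ) :
    ∫ t, |u - t| ∂ν ≤ |u - a| + ∫ t, |t - a| ∂ν := by
  have hcent : Integrable (fun t => |t - a|) ν := (hX.sub (integrable_const a)).abs
  calc ∫ t, |u - t| ∂ν ≤ ∫ t, (|u - a| + |t - a|) ∂ν :=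
        integral_mono ((integrable_const u).sub hX).abs ((integrable_const _).add hcent)
          fun t => (abs_sub_le u a t).trans_eq (by rw [abs_sub_comm a t])
    _ = |u - a| + ∫ t, |t - a| ∂ν := by rw [integral_add (integrable_const _) hcent]; simp

theorem abs_integral_abs_sub_sub_le (hX : Integrable (fun t => t) ν) (u v : ℝ) :
    |((∫ t, |v - t| ∂ν) - |u - v|)| ≤ ∫ t, |u - t| ∂ν := by
  have hv : Integrable (fun t => |v - t|) ν := ((integrable_const v).sub hX).abs
  calc |((∫ t, |v - t| ∂ν) - |u - v|)|
      = |∫ t, (|v - t| - |v - u|) ∂ν| := by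
        rw [integral_sub hv (integrable_const _), abs_sub_comm v u]; simp
    _ ≤ ∫ t, |(|v - t| - |v - u|)| ∂ν := abs_integral_le_integral_abs
    _ ≤ ∫ t, |u - t| ∂ν :=
        integral_mono (hv.sub (integrable_const _)).abs ((integrable_const u).sub hX).abs
          fun t => by simpa using abs_abs_sub_abs_le_abs_sub (v - t) (v - u)

theorem abs_Ufun_le (hX : Integrable (fun t => t) ν) (a u v : ℝ) :
    |Ufun ν u v| ≤ 2 * |u - a| + 4 * ∫ t, |t - a| ∂ν := by
  set m : ℝ → ℝ := fun w => ∫ t, |w - t| ∂ν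
  set c := ∫ t, |t - a| ∂ν
  have hm_nonneg : ∀ w, 0 ≤ m w := fun w => integral_nonneg fun t => abs_nonneg _
  have hm_le : ∀ w, m w ≤ |w - a| + c := integral_abs_sub_le hX a
  have hM_nonneg : 0 ≤ ∫ s, m s ∂ν := integral_nonneg hm_nonneg
  have hcent : Integrable (fun s => |s - a|) ν := (hX.sub (integrable_const a)).abs
  have hM_le : ∫ s, m s ∂ν ≤ 2 * c :=
    calc ∫ s, m s ∂ν ≤ ∫ s, (|s - a| + c) ∂ν :=
          integral_mono_of_nonneg (.of_forall hm_nonneg)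
            (hcent.add (integrable_const c)) (.of_forall hm_le)
      _ = 2 * c := by rw [integral_add hcent (integrable_const c)]; simp [c]; ring
  have hU : Ufun ν u v = (m u - ∫ s, m s ∂ν) + (m v - |u - v|) := by
    have hv : ∫ t, |t - v| ∂ν = m v := integral_congr_ae (.of_forall fun t => abs_sub_comm t v)
    simp only [Ufun, hv]
    ring
  rw [hU]
  calc |(m u - ∫ s, m s ∂ν) + (m v - |u - v|)|
      ≤ |m u - ∫ s, m s ∂ν| + |(m v - |u - v|)| := abs_add_le _ _
    _ ≤ (m u + ∫ s, m s ∂ν) + m u :=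
        add_le_add (abs_sub_le_iff.2 ⟨by linarith [hm_nonneg u], by linarith [hm_nonneg u]⟩)
          (abs_integral_abs_sub_sub_le hX u v)
    _ ≤ 2 * |u - a| + 4 * c := by linarith [hm_le u]

end DistanceKernel

/-- There is a universal constant `C > 0` such that for every real random variable `x_j`
with finite second moment, `E[U_j(x_j, x_j')⁴] ≤ C var(x_j)²`. -/
theorem stmt13 :
    ∃ C : ℝ, 0 < C ∧
      ∀ (ν : Measure ℝ), IsProbabilityMeasure ν →
        Integrable (fun t : ℝ => t ^ 2) ν →
        (∫ p : ℝ × ℝ, (Ufun ν p.1 p.2) ^ 4 ∂(ν.prod ν))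
          ≤ C * (ProbabilityTheory.variance (fun t : ℝ => t) ν) ^ 2 := by
  refine ⟨1600, by norm_num, fun ν _ hsq => ?_⟩
  have hX : MemLp (fun t : ℝ => t) 2 ν :=
    (memLp_two_iff_integrable_sq aestronglyMeasurable_id).2 hsq
  set μ₀ := ∫ t, t ∂ν
  set c := ∫ t, |t - μ₀| ∂ν
  set V := variance (fun t : ℝ => t) ν
  have hU : ∀ u v, |Ufun ν u v| ≤ 2 * |u - μ₀| + 4 * c :=
    abs_Ufun_le (hX.integrable one_le_two) μ₀
  have hg : MemLp (fun u => 2 * |u - μ₀| + 4 * c) 2 ν :=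
    ((hX.sub (memLp_const μ₀)).abs.const_mul 2).add (memLp_const _)
  have hg_sq : ∫ u, (2 * |u - μ₀| + 4 * c) ^ 2 ∂ν ≤ 40 * V :=
    (integral_sq_mul_abs_sub_integral_add_le hX 2 4).trans_eq (by norm_num [V])
  calc ∫ p : ℝ × ℝ, Ufun ν p.1 p.2 ^ 4 ∂(ν.prod ν)
      ≤ (∫ u, (2 * |u - μ₀| + 4 * c) ^ 2 ∂ν) ^ 2 :=
        integral_pow_four_le_of_abs_le hg hU fun u v => Ufun_comm ν u v ▸ hU v u
    _ ≤ (40 * V) ^ 2 := pow_le_pow_left₀ (integral_nonneg fun _ => sq_nonneg _) hg_sq 2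
    _ = 1600 * V ^ 2 := by ring
end

section
/- Let $x_j, x_k, x_l, x_m$ be real random variables with finite first moments and means $\mu_j,\mu_k,\mu_l,\mu_m$, and let $(x_j',x_k',\dots)$, $(x_j'',\dots)$, $(x_j''',\dots)$ be independent copies of the random vector. With $U_j$ the double-centered distance kernel for $x_j$, there is a universal constant $C' > 0$ such that $|\mathbb{E}[U_j(x_j,x'_j)U_k(x'_k,x''_k)U_l(x''_l,x'''_l)U_m(x'''_m,x_m)]| \leq C'\,\mathbb{E}|x_j-\mu_j|\,\mathbb{E}|x_k-\mu_k|\,\mathbb{E}|x_l-\mu_l|\,\mathbb{E}|x_m-\mu_m|$. -/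
open MeasureTheory

/-- The double-centered distance kernel of the `c`-th coordinate of a random vector with
law `ν` on `Fin 4 → ℝ`. -/
noncomputable def Ucoord (ν : Measure (Fin 4 → ℝ)) (c : Fin 4) (u v : ℝ) : ℝ :=
  (∫ w, |u - w c| ∂ν) + (∫ w, |w c - v| ∂ν) - |u - v|
    - ∫ w, ∫ w', |w c - w' c| ∂ν ∂ν

/-- There is a universal constant `C' > 0` such that for four independent copies
`x, x', x'', x'''` of a random vector `(x_j, x_k, x_l, x_m)` with finite first moments,
`|E[U_j(x_j,x'_j) U_k(x'_k,x''_k) U_l(x''_l,x'''_l) U_m(x'''_m,x_m)]|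
  ≤ C' E|x_j-μ_j| E|x_k-μ_k| E|x_l-μ_l| E|x_m-μ_m|`. -/
theorem stmt14 :
    ∃ C' : ℝ, 0 < C' ∧
      ∀ (ν : Measure (Fin 4 → ℝ)), IsProbabilityMeasure ν →
        (∀ c : Fin 4, Integrable (fun w => w c) ν) →
        |∫ ω : Fin 4 → Fin 4 → ℝ,
              Ucoord ν 0 (ω 0 0) (ω 1 0) * Ucoord ν 1 (ω 1 1) (ω 2 1) *
                Ucoord ν 2 (ω 2 2) (ω 3 2) * Ucoord ν 3 (ω 3 3) (ω 0 3)
              ∂(Measure.pi fun _ : Fin 4 => ν)|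
          ≤ C' * ∏ c : Fin 4, ∫ w, |w c - ∫ w', w' c ∂ν| ∂ν := by
  refine ⟨1296, by norm_num, ?_⟩
  intro ν hν hint
  set μ : Fin 4 → ℝ := fun c => ∫ w', w' c ∂ν with hμ
  set M : Fin 4 → ℝ := fun c => ∫ w, |w c - μ c| ∂ν with hM
  have hMnn : ∀ c, 0 ≤ M c := fun c => integral_nonneg fun w => abs_nonneg _
  have hIntAbs : ∀ c, Integrable (fun w => |w c - μ c|) ν :=
    fun c => ((hint c).sub (integrable_const _)).abs
  have hIntu : ∀ (c : Fin 4) (u : ℝ), Integrable (fun w => |u - w c|) ν :=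
    fun c u => ((integrable_const u).sub (hint c)).abs
  have hIntv : ∀ (c : Fin 4) (v : ℝ), Integrable (fun w => |w c - v|) ν :=
    fun c v => ((hint c).sub (integrable_const v)).abs
  have hA : ∀ (c : Fin 4) (u : ℝ), (∫ w, |u - w c| ∂ν) ≤ |u - μ c| + M c := by
    intro c u
    have h1 : ∀ w : Fin 4 → ℝ, |u - w c| ≤ |u - μ c| + |w c - μ c| := by
      intro w
      have e : u - w c = (u - μ c) + (μ c - w c) := by ring
      rw [e]
      refine (abs_add_le _ _).trans ?_
      rw [abs_sub_comm (μ c) (w c)]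
    calc (∫ w, |u - w c| ∂ν) ≤ ∫ w, (|u - μ c| + |w c - μ c|) ∂ν :=
          integral_mono (hIntu c u) ((integrable_const _).add (hIntAbs c)) h1
      _ = |u - μ c| + M c := by
          rw [integral_add (integrable_const _) (hIntAbs c), integral_const]
          simp [hM]
  have hAnn : ∀ (c : Fin 4) (u : ℝ), 0 ≤ ∫ w, |u - w c| ∂ν :=
    fun c u => integral_nonneg fun w => abs_nonneg _
  have hDnn : ∀ c : Fin 4, 0 ≤ ∫ w, ∫ w', |w c - w' c| ∂ν ∂ν :=
    fun c => integral_nonneg fun w => integral_nonneg fun w' => abs_nonneg _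
  have hD : ∀ c : Fin 4, (∫ w, ∫ w', |w c - w' c| ∂ν ∂ν) ≤ 2 * M c := by
    intro c
    calc (∫ w, ∫ w', |w c - w' c| ∂ν ∂ν) ≤ ∫ w, (|w c - μ c| + M c) ∂ν :=
        integral_mono_of_nonneg
          (Filter.Eventually.of_forall fun w => integral_nonneg fun w' => abs_nonneg _)
          ((hIntAbs c).add (integrable_const _))
          (Filter.Eventually.of_forall fun w => hA c (w c))
      _ = M c + M c := by
          rw [integral_add (hIntAbs c) (integrable_const _), integral_const]; simp [hM]
      _ = 2 * M c := by ring
  -- pointwise bound on the kernel, by a function of the first argument only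
  have hU : ∀ (c : Fin 4) (u v : ℝ), |Ucoord ν c u v| ≤ 2 * |u - μ c| + 4 * M c := by
    intro c u v
    have hBv : abs ((∫ w, |w c - v| ∂ν) - |u - v|) ≤ ∫ w, |u - w c| ∂ν := by
      have heq : (∫ w, |w c - v| ∂ν) - |u - v| = ∫ w, (abs (w c - v) - abs (u - v)) ∂ν := by
        rw [integral_sub (hIntv c v) (integrable_const _), integral_const]; simp
      rw [heq]
      have := norm_integral_le_of_norm_le (μ := ν)
        (f := fun w => abs (w c - v) - abs (u - v)) (g := fun w => |u - w c|) (hIntu c u)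
        (Filter.Eventually.of_forall fun w => by
          calc ‖abs (w c - v) - abs (u - v)‖
              = abs (abs (w c - v) - abs (u - v)) := Real.norm_eq_abs _
            _ ≤ abs ((w c - v) - (u - v)) := abs_abs_sub_abs_le_abs_sub _ _
            _ = abs (u - w c) := by
                rw [show (w c - v) - (u - v) = -(u - w c) by ring, abs_neg])
      simpa [Real.norm_eq_abs] using this
    have h1 : Ucoord ν c u v = ((∫ w, |w c - v| ∂ν) - |u - v|)
        + ((∫ w, |u - w c| ∂ν) - ∫ w, ∫ w', |w c - w' c| ∂ν ∂ν) := by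
      unfold Ucoord; ring
    have h2 := abs_add_le ((∫ w, |w c - v| ∂ν) - |u - v|)
        ((∫ w, |u - w c| ∂ν) - ∫ w, ∫ w', |w c - w' c| ∂ν ∂ν)
    have h3 := abs_sub (∫ w, |u - w c| ∂ν) (∫ w, ∫ w', |w c - w' c| ∂ν ∂ν)
    rw [abs_of_nonneg (hAnn c u), abs_of_nonneg (hDnn c)] at h3
    have h4 := hA c u
    have h5 := hD c
    rw [h1]
    calc |_ + _| ≤ _ := h2
      _ ≤ 2 * |u - μ c| + 4 * M c := by
          have := abs_nonneg (u - μ c)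
          linarith
  -- the bounding function
  set b : Fin 4 → ℝ → ℝ := fun c t => 2 * |t - μ c| + 4 * M c with hb
  have hbnn : ∀ (c : Fin 4) (t : ℝ), 0 ≤ b c t := by
    intro c t
    have := abs_nonneg (t - μ c); have := hMnn c
    simp only [hb]; linarith
  haveI : SigmaFinite ν := inferInstance
  letI : MeasureSpace (Fin 4 → ℝ) := ⟨ν⟩
  haveI : SigmaFinite (volume : Measure (Fin 4 → ℝ)) := (inferInstance : SigmaFinite ν)
  have hbInt : ∀ c : Fin 4, Integrable (fun y : Fin 4 → ℝ => b c (y c)) ν := by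
    intro c
    exact (((hint c).sub (integrable_const _)).abs.const_mul 2).add (integrable_const _)
  have hbi : ∀ c : Fin 4, (∫ y : Fin 4 → ℝ, b c (y c) ∂ν) = 6 * M c := by
    intro c
    simp only [hb]
    rw [integral_add ((hIntAbs c).const_mul 2) (integrable_const _), integral_const_mul,
      integral_const]
    simp [hM]
    ring
  have hGint : Integrable (fun ω : Fin 4 → Fin 4 → ℝ => ∏ c, b c (ω c c))
      (Measure.pi fun _ : Fin 4 => ν) :=
    Integrable.fin_nat_prod (f := fun c (y : Fin 4 → ℝ) => b c (y c)) hbInt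
  have hprod : (∫ ω : Fin 4 → Fin 4 → ℝ, ∏ c, b c (ω c c) ∂(Measure.pi fun _ : Fin 4 => ν))
      = ∏ c, ∫ y : Fin 4 → ℝ, b c (y c) ∂ν :=
    integral_fin_nat_prod_eq_prod (fun c (y : Fin 4 → ℝ) => b c (y c))
  have hmain : |∫ ω : Fin 4 → Fin 4 → ℝ,
        Ucoord ν 0 (ω 0 0) (ω 1 0) * Ucoord ν 1 (ω 1 1) (ω 2 1) *
          Ucoord ν 2 (ω 2 2) (ω 3 2) * Ucoord ν 3 (ω 3 3) (ω 0 3)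
        ∂(Measure.pi fun _ : Fin 4 => ν)|
      ≤ ∫ ω : Fin 4 → Fin 4 → ℝ, ∏ c, b c (ω c c) ∂(Measure.pi fun _ : Fin 4 => ν) := by
    have := norm_integral_le_of_norm_le (μ := Measure.pi fun _ : Fin 4 => ν)
      (f := fun ω : Fin 4 → Fin 4 → ℝ =>
        Ucoord ν 0 (ω 0 0) (ω 1 0) * Ucoord ν 1 (ω 1 1) (ω 2 1) *
          Ucoord ν 2 (ω 2 2) (ω 3 2) * Ucoord ν 3 (ω 3 3) (ω 0 3))
      (g := fun ω : Fin 4 → Fin 4 → ℝ => ∏ c, b c (ω c c)) hGint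
      (Filter.Eventually.of_forall fun ω => by
        simp only [Real.norm_eq_abs, Fin.prod_univ_four]
        rw [abs_mul, abs_mul, abs_mul]
        have h0 := hU 0 (ω 0 0) (ω 1 0)
        have h1 := hU 1 (ω 1 1) (ω 2 1)
        have h2 := hU 2 (ω 2 2) (ω 3 2)
        have h3 := hU 3 (ω 3 3) (ω 0 3)
        gcongr)
    simpa [Real.norm_eq_abs] using this
  calc |∫ ω : Fin 4 → Fin 4 → ℝ,
        Ucoord ν 0 (ω 0 0) (ω 1 0) * Ucoord ν 1 (ω 1 1) (ω 2 1) *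
          Ucoord ν 2 (ω 2 2) (ω 3 2) * Ucoord ν 3 (ω 3 3) (ω 0 3)
        ∂(Measure.pi fun _ : Fin 4 => ν)|
      ≤ ∫ ω : Fin 4 → Fin 4 → ℝ, ∏ c, b c (ω c c) ∂(Measure.pi fun _ : Fin 4 => ν) := hmain
    _ = ∏ c, ∫ y : Fin 4 → ℝ, b c (y c) ∂ν := hprod
    _ = ∏ c : Fin 4, (6 * M c) := by exact Finset.prod_congr rfl fun c _ => hbi c
    _ = 1296 * ∏ c : Fin 4, M c := by
        rw [Finset.prod_mul_distrib, Finset.prod_const]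
        norm_num
end
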